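/- arXiv:math-ph/0609057 — 2 statements merged into one kernel-verified Lean document; each statement's English description precedes it below -/
import Mathlib

section
/- If X ∈ gl_N(ℂ) satisfies GX = XG, then for every k = 1,…,L one has [Σ_{ℓ=1}^L X^{(ℓ)}, H_k^{(n)}] = 0; i.e. the twisted Gaudin model has the fixed-point subalgebra {X ∈ gl_N(ℂ) : G^{−1}XG = X} (isomorphic to gl_{N_0} ⊕ ⋯ ⊕ gl_{N_{n−1}} when G is diagonalizable with eigenvalue multiplicities N_0,…,N_{n−1}) as a symmetry algebra. -/
open Matrix
open scoped TensorProduct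

noncomputable section

/-- `τ = e^{2πi/n}`. -/
def tau (n : ℕ) : ℂ := Complex.exp (2 * Real.pi * Complex.I / n)

variable {N L : ℕ}
variable {V : Fin L → Type} [∀ ℓ, AddCommGroup (V ℓ)] [∀ ℓ, Module ℂ (V ℓ)]
variable (ρ : ∀ ℓ, Matrix (Fin N) (Fin N) ℂ →ₗ[ℂ] Module.End ℂ (V ℓ))

/-- The operator `X^{(ℓ)}` on `W = ⨂_ℓ V ℓ`, acting as `ρ ℓ X` in the `ℓ`-th tensor
factor and as the identity elsewhere. -/
def siteOp (ℓ : Fin L) (X : Matrix (Fin N) (Fin N) ℂ) :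
    Module.End ℂ (⨂[ℂ] i, V i) :=
  PiTensorProduct.map (Function.update (fun i => (LinearMap.id : V i →ₗ[ℂ] V i)) ℓ (ρ ℓ X))

/-- The matrix `𝐏_{aℓ}` over `End W`, whose `(i,j)` entry is `(E_{ji})^{(ℓ)}`. -/
def Pm (ℓ : Fin L) : Matrix (Fin N) (Fin N) (Module.End ℂ (⨂[ℂ] i, V i)) :=
  Matrix.of fun i j => siteOp ρ ℓ (Matrix.single j i 1)

/-- `T_a(u) = Σ_ℓ (u − z_ℓ)⁻¹ 𝐏_{aℓ}`. -/
def Tm (z : Fin L → ℂ) (u : ℂ) : Matrix (Fin N) (Fin N) (Module.End ℂ (⨂[ℂ] i, V i)) :=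
  ∑ ℓ : Fin L, (u - z ℓ)⁻¹ • Pm ρ ℓ

/-- A scalar `N×N` matrix viewed as a matrix over `End W`. -/
def emb (V : Fin L → Type) [∀ ℓ, AddCommGroup (V ℓ)] [∀ ℓ, Module ℂ (V ℓ)]
    (M : Matrix (Fin N) (Fin N) ℂ) :
    Matrix (Fin N) (Fin N) (Module.End ℂ (⨂[ℂ] i, V i)) :=
  M.map (algebraMap ℂ (Module.End ℂ (⨂[ℂ] i, V i)))

/-- `B_a(u) = Σ_{k=0}^{n−1} τ^k G^k T_a(τ^k u) G^{−k}`. -/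
def Bm (z : Fin L → ℂ) (n : ℕ) (G : Matrix (Fin N) (Fin N) ℂ) (u : ℂ) :
    Matrix (Fin N) (Fin N) (Module.End ℂ (⨂[ℂ] i, V i)) :=
  ∑ k ∈ Finset.range n,
    tau n ^ k • (emb V (G ^ k) * Tm ρ z (tau n ^ k * u) * emb V (G⁻¹ ^ k))

/-- `M_a = M ⊗ 1` as an `N²×N²` matrix. -/
def aM {A : Type} [Zero A] (M : Matrix (Fin N) (Fin N) A) :
    Matrix (Fin N × Fin N) (Fin N × Fin N) A :=
  Matrix.of fun p q => if p.2 = q.2 then M p.1 q.1 else 0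

/-- `M_b = 1 ⊗ M` as an `N²×N²` matrix. -/
def bM {A : Type} [Zero A] (M : Matrix (Fin N) (Fin N) A) :
    Matrix (Fin N × Fin N) (Fin N × Fin N) A :=
  Matrix.of fun p q => if p.1 = q.1 then M p.2 q.2 else 0

/-- The permutation matrix `P_{ab} = Σ_{ij} E_{ij} ⊗ E_{ji}`. -/
def PP (N : ℕ) (A : Type) [Zero A] [One A] :
    Matrix (Fin N × Fin N) (Fin N × Fin N) A :=
  Matrix.of fun p q => if p.1 = q.2 ∧ p.2 = q.1 then 1 else 0

/-- The inner-twisted Gaudin Hamiltonian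
`H_k^{(n)} = Σ_{j≠k} Σ_{p=0}^{n−1} (z_k − τ^p z_j)⁻¹ tr_a(𝐏_{ak} G^{−p} 𝐏_{aj} G^{p})
  + Σ_{p=1}^{n−1} (2z_k)⁻¹ tr_a(𝐏_{ak} G^{−p} 𝐏_{ak} G^{p})`. -/
def Hin (z : Fin L → ℂ) (n : ℕ) (G : Matrix (Fin N) (Fin N) ℂ) (k : Fin L) :
    Module.End ℂ (⨂[ℂ] i, V i) :=
  (∑ j ∈ Finset.univ.filter (fun j => j ≠ k), ∑ p ∈ Finset.range n,
      (z k - tau n ^ p * z j)⁻¹ •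
        (Pm ρ k * emb V (G⁻¹ ^ p) * Pm ρ j * emb V (G ^ p)).trace)
    + ∑ p ∈ Finset.Ico 1 n,
        (2 * z k)⁻¹ • (Pm ρ k * emb V (G⁻¹ ^ p) * Pm ρ k * emb V (G ^ p)).trace

/-!
Let `Ω = X_a + Σ_ℓ X^{(ℓ)}` be the action of `X` on `ℂ^N ⊗ W`. Every `𝐏_{aℓ}` commutes with `Ω`
(it is the permutation of the auxiliary space with the `ℓ`-th site, hence `gl_N`-invariant), and so
do `G^p` and `G^{-p}` because `X` commutes with `G`. So `Ω` commutes with every product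
`𝐏_{ak} G^{-p} 𝐏_{aj} G^p` occurring in `H_k^{(n)}`; taking `tr_a` kills the scalar part `X_a`,
since `tr_a (M X_a) = tr_a (X_a M)`, and leaves `[Σ_ℓ X^{(ℓ)}, tr_a M] = 0`.
-/

theorem Commute.ringInverse_right {M₀ : Type*} [MonoidWithZero M₀] {a b : M₀}
    (h : Commute a b) : Commute a (Ring.inverse b) := by
  by_cases hb : IsUnit b
  · obtain ⟨u, rfl⟩ := hb
    rw [Ring.inverse_unit]
    exact h.units_inv_right
  · rw [Ring.inverse_non_unit b hb]
    exact Commute.zero_right a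

section TwistedGaudin

def siteOpₗ (ℓ : Fin L) : Matrix (Fin N) (Fin N) ℂ →ₗ[ℂ] Module.End ℂ (⨂[ℂ] i, V i) :=
  ((PiTensorProduct.mapMultilinear ℂ V V).toLinearMap (fun _ => LinearMap.id) ℓ) ∘ₗ ρ ℓ

theorem siteOpₗ_apply (ℓ : Fin L) (A : Matrix (Fin N) (Fin N) ℂ) :
    siteOpₗ ρ ℓ A = siteOp ρ ℓ A :=
  rfl

theorem siteOp_mul_siteOp (ℓ : Fin L) (A B : Matrix (Fin N) (Fin N) ℂ) :
    siteOp ρ ℓ A * siteOp ρ ℓ B =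
      PiTensorProduct.map (Function.update (fun _ => LinearMap.id) ℓ (ρ ℓ A * ρ ℓ B)) := by
  rw [siteOp, siteOp, ← PiTensorProduct.map_mul]
  congr 1
  funext i
  rcases eq_or_ne i ℓ with rfl | hiℓ
  · simp
  · simp [Function.update_of_ne hiℓ, Module.End.mul_eq_comp]

theorem commute_siteOp_of_ne {ℓ m : Fin L} (h : ℓ ≠ m) (A B : Matrix (Fin N) (Fin N) ℂ) :
    Commute (siteOp ρ ℓ A) (siteOp ρ m B) := by
  simp only [siteOp]
  rw [Commute, SemiconjBy, ← PiTensorProduct.map_mul, ← PiTensorProduct.map_mul]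
  congr 1
  funext i
  rcases eq_or_ne i ℓ with rfl | hiℓ
  · simp [Function.update_of_ne h, Module.End.mul_eq_comp]
  · rcases eq_or_ne i m with rfl | him
    · simp [Function.update_of_ne hiℓ, Module.End.mul_eq_comp]
    · simp [Function.update_of_ne hiℓ, Function.update_of_ne him]

variable {ρ}

theorem siteOp_commutator
    (hρ : ∀ ℓ (X Y : Matrix (Fin N) (Fin N) ℂ),
      ρ ℓ (X * Y - Y * X) = ρ ℓ X * ρ ℓ Y - ρ ℓ Y * ρ ℓ X)
    (ℓ : Fin L) (A B : Matrix (Fin N) (Fin N) ℂ) :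
    siteOp ρ ℓ (A * B - B * A) = siteOp ρ ℓ A * siteOp ρ ℓ B - siteOp ρ ℓ B * siteOp ρ ℓ A := by
  rw [siteOp_mul_siteOp, siteOp_mul_siteOp, siteOp, hρ, sub_eq_add_neg, sub_eq_add_neg,
    ← neg_one_smul ℂ (ρ ℓ B * ρ ℓ A), ← neg_one_smul ℂ (PiTensorProduct.map _),
    PiTensorProduct.map_update_add, PiTensorProduct.map_update_smul]

theorem sum_siteOp_commutator
    (hρ : ∀ ℓ (X Y : Matrix (Fin N) (Fin N) ℂ),
      ρ ℓ (X * Y - Y * X) = ρ ℓ X * ρ ℓ Y - ρ ℓ Y * ρ ℓ X)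
    (X : Matrix (Fin N) (Fin N) ℂ) (ℓ : Fin L) (E : Matrix (Fin N) (Fin N) ℂ) :
    (∑ m, siteOp ρ m X) * siteOp ρ ℓ E - siteOp ρ ℓ E * (∑ m, siteOp ρ m X) =
      siteOp ρ ℓ (X * E - E * X) := by
  rw [Finset.sum_mul, Finset.mul_sum, ← Finset.sum_sub_distrib,
    Finset.sum_eq_single_of_mem ℓ (Finset.mem_univ ℓ), siteOp_commutator hρ]
  intro m _ hm
  rw [(commute_siteOp_of_ne ρ hm X E).eq, sub_self]

theorem Pm_mul_emb_apply (ℓ : Fin L) (A : Matrix (Fin N) (Fin N) ℂ) (i j : Fin N) :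
    (Pm ρ ℓ * emb V A) i j = siteOp ρ ℓ (A * Matrix.single j i 1) := by
  have hA : A * Matrix.single j i 1 = ∑ r, A r j • Matrix.single r i 1 := by
    ext a b
    simp [Matrix.mul_apply, Matrix.single, Matrix.sum_apply, ite_and]
  rw [hA, ← siteOpₗ_apply, map_sum, Matrix.mul_apply]
  refine Finset.sum_congr rfl fun r _ => ?_
  rw [map_smul, Algebra.smul_def, Algebra.commutes]
  rfl

theorem emb_mul_Pm_apply (ℓ : Fin L) (A : Matrix (Fin N) (Fin N) ℂ) (i j : Fin N) :
    (emb V A * Pm ρ ℓ) i j = siteOp ρ ℓ (Matrix.single j i 1 * A) := by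
  have hA : Matrix.single j i 1 * A = ∑ r, A i r • Matrix.single j r 1 := by
    ext a b
    simp [Matrix.mul_apply, Matrix.single, Matrix.sum_apply, ite_and]
  rw [hA, ← siteOpₗ_apply, map_sum, Matrix.mul_apply]
  refine Finset.sum_congr rfl fun r _ => ?_
  rw [map_smul, Algebra.smul_def]
  rfl

variable (ρ) in
/-- `X_a + Σ_ℓ X^{(ℓ)}`, the action of `X` on `ℂ^N ⊗ W`. -/
def auxTotalAction (X : Matrix (Fin N) (Fin N) ℂ) :
    Matrix (Fin N) (Fin N) (Module.End ℂ (⨂[ℂ] i, V i)) :=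
  emb V X + Matrix.diagonal fun _ => ∑ ℓ, siteOp ρ ℓ X

theorem commute_auxTotalAction_Pm
    (hρ : ∀ ℓ (X Y : Matrix (Fin N) (Fin N) ℂ),
      ρ ℓ (X * Y - Y * X) = ρ ℓ X * ρ ℓ Y - ρ ℓ Y * ρ ℓ X)
    (X : Matrix (Fin N) (Fin N) ℂ) (ℓ : Fin L) :
    Commute (auxTotalAction ρ X) (Pm ρ ℓ) := by
  refine Matrix.ext fun i j => ?_
  have h := sum_siteOp_commutator hρ X ℓ (Matrix.single j i 1)
  rw [← siteOpₗ_apply ρ ℓ (_ - _), map_sub] at h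
  simp only [siteOpₗ_apply] at h
  simp only [auxTotalAction, add_mul, mul_add, Matrix.add_apply, Matrix.diagonal_mul,
    Matrix.mul_diagonal, Pm_mul_emb_apply, emb_mul_Pm_apply]
  simp only [Pm, Matrix.of_apply]
  linear_combination (norm := noncomm_ring) h

theorem commute_auxTotalAction_emb {X A : Matrix (Fin N) (Fin N) ℂ} (h : Commute X A) :
    Commute (auxTotalAction ρ X) (emb V A) := by
  refine Commute.add_left ?_ ?_
  · exact h.map (RingHom.mapMatrix (algebraMap ℂ (Module.End ℂ (⨂[ℂ] i, V i))))
  · refine Matrix.ext fun i j => ?_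
    simp only [Matrix.diagonal_mul, Matrix.mul_diagonal, emb, Matrix.map_apply]
    exact (Algebra.commutes _ _).symm

theorem trace_mul_emb_comm (M : Matrix (Fin N) (Fin N) (Module.End ℂ (⨂[ℂ] i, V i)))
    (A : Matrix (Fin N) (Fin N) ℂ) :
    (M * emb V A).trace = (emb V A * M).trace := by
  simp only [Matrix.trace, Matrix.diag, Matrix.mul_apply, emb, Matrix.map_apply,
    ← Algebra.commutes]
  exact Finset.sum_comm

theorem commute_sum_siteOp_trace {X : Matrix (Fin N) (Fin N) ℂ}
    {M : Matrix (Fin N) (Fin N) (Module.End ℂ (⨂[ℂ] i, V i))}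
    (hM : Commute (auxTotalAction ρ X) M) :
    Commute (∑ ℓ, siteOp ρ ℓ X) M.trace := by
  set S := ∑ ℓ, siteOp ρ ℓ X
  have hD : Matrix.diagonal (fun _ => S) * M - M * Matrix.diagonal (fun _ => S) =
      M * emb V X - emb V X * M := by
    have := hM.eq
    simp only [auxTotalAction, add_mul, mul_add] at this
    linear_combination (norm := noncomm_ring) this
  have htr := congrArg Matrix.trace hD
  rw [Matrix.trace_sub, Matrix.trace_sub, trace_mul_emb_comm, sub_self, sub_eq_zero] at htr
  show S * M.trace = M.trace * S
  simpa only [Matrix.trace, Matrix.diag, Matrix.diagonal_mul, Matrix.mul_diagonal,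
    ← Finset.mul_sum, ← Finset.sum_mul] using htr

end TwistedGaudin

theorem statement7
    (hρ : ∀ ℓ (X Y : Matrix (Fin N) (Fin N) ℂ),
      ρ ℓ (X * Y - Y * X) = ρ ℓ X * ρ ℓ Y - ρ ℓ Y * ρ ℓ X)
    (n : ℕ) (G : Matrix (Fin N) (Fin N) ℂ)
    (z : Fin L → ℂ)
    (X : Matrix (Fin N) (Fin N) ℂ) (hX : G * X = X * G)
    (k : Fin L) :
    (∑ ℓ : Fin L, siteOp ρ ℓ X) * Hin ρ z n G k -
      Hin ρ z n G k * (∑ ℓ : Fin L, siteOp ρ ℓ X) = 0 := by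
  have hXG : Commute X G := hX.symm
  have hXG_inv : Commute X G⁻¹ := by
    rw [Matrix.nonsing_inv_eq_ringInverse]
    exact hXG.ringInverse_right
  have hterm (j : Fin L) (p : ℕ) : Commute (∑ ℓ, siteOp ρ ℓ X)
      (Pm ρ k * emb V (G⁻¹ ^ p) * Pm ρ j * emb V (G ^ p)).trace :=
    commute_sum_siteOp_trace <|
      (((commute_auxTotalAction_Pm hρ X k).mul_right
        (commute_auxTotalAction_emb (hXG_inv.pow_right p))).mul_right
        (commute_auxTotalAction_Pm hρ X j)).mul_right
        (commute_auxTotalAction_emb (hXG.pow_right p))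
  rw [sub_eq_zero, Hin]
  refine Commute.eq (Commute.add_right ?_ ?_)
  · exact Commute.sum_right _ _ _ fun j _ =>
      Commute.sum_right _ _ _ fun p _ => (hterm j p).smul_right _
  · exact Commute.sum_right _ _ _ fun p _ => (hterm k p).smul_right _
end
end

section
/- If X ∈ gl_N(ℂ) satisfies K X^t K^{−1} = −X, then for every complex u with u, −u ∉ {z_1,…,z_L}, one has [Σ_{ℓ=1}^L X^{(ℓ)}, s′(u)] = 0, where s′(u) := tr_a(S_a(u)²). (This is the statement that the coefficients of tr S(u)² commute with the degree-zero generators S^{(0)} of the twisted half loop algebra; the matrices X with K X^t K^{−1} = −X form a Lie algebra isomorphic to so(p,q) for η = +1 and sp(N) for η = −1.) -/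
open Matrix
open scoped TensorProduct

noncomputable section

variable {N L : ℕ}
variable {V : Fin L → Type} [∀ ℓ, AddCommGroup (V ℓ)] [∀ ℓ, Module ℂ (V ℓ)]
variable (ρ : ∀ ℓ, Matrix (Fin N) (Fin N) ℂ →ₗ[ℂ] Module.End ℂ (V ℓ))

/-- `S_a(u) = T_a(u) + K T_a(−u)^{t_a} K⁻¹`. -/
def Sm (z : Fin L → ℂ) (K : Matrix (Fin N) (Fin N) ℂ) (u : ℂ) :
    Matrix (Fin N) (Fin N) (Module.End ℂ (⨂[ℂ] i, V i)) :=
  Tm ρ z u + emb V K * (Tm ρ z (-u))ᵀ * emb V K⁻¹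

/-- Partial transposition `t_a` in the first auxiliary factor of an `N²×N²` matrix. -/
def ptA {A : Type} (M : Matrix (Fin N × Fin N) (Fin N × Fin N) A) :
    Matrix (Fin N × Fin N) (Fin N × Fin N) A :=
  Matrix.of fun p q => M (q.1, p.2) (p.1, q.2)

/-- Partial transposition `t_b` in the second auxiliary factor of an `N²×N²` matrix. -/
def ptB {A : Type} (M : Matrix (Fin N × Fin N) (Fin N × Fin N) A) :
    Matrix (Fin N × Fin N) (Fin N × Fin N) A :=
  Matrix.of fun p q => M (p.1, q.2) (q.1, p.2)

/-!
Let `x = ∑ ℓ, X^{(ℓ)}` and let `Δ = x ⊗ 1 + 1 ⊗ X` be the `N × N` matrix `scalar x + X` over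
`End W`. Each `𝐏_{aℓ}` commutes with `Δ` (the permutation operator is `gl_N`-invariant), hence so
does `T(u)`. Transposing in the auxiliary space, `T(-u)ᵗ` commutes with `scalar x - Xᵀ`, and
conjugating by `K` turns `-K Xᵀ K⁻¹` back into `X`; so `Δ` commutes with `S(u)` and with `S(u)²`.
Taking the trace, the part `1 ⊗ X` has scalar entries and drops out, leaving `[x, tr S(u)²] = 0`.
-/

namespace PiTensorProduct

variable {ι R : Type*} [CommSemiring R] [DecidableEq ι]
  {M : ι → Type*} [∀ i, AddCommMonoid (M i)] [∀ i, Module R (M i)]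

variable (R M) in
/-- The endomorphism of `⨂ i, M i` acting by `f` on the `i`-th factor and trivially elsewhere. -/
def mapAt (i : ι) : Module.End R (M i) →ₐ[R] Module.End R (⨂[R] j, M j) :=
  AlgHom.ofLinearMap ((mapMultilinear R M M).toLinearMap 1 i)
    (by
      simp only [MultilinearMap.toLinearMap_apply, mapMultilinear_apply, Function.update_one]
      exact PiTensorProduct.map_one (R := R) (s := M))
    (fun f g => by
      simp only [MultilinearMap.toLinearMap_apply, mapMultilinear_apply, ← PiTensorProduct.map_mul]
      rw [← Pi.mul_def, ← Function.update_mul, one_mul])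

theorem commute_mapAt {i j : ι} (hij : i ≠ j) (f : Module.End R (M i))
    (g : Module.End R (M j)) : Commute (mapAt R M i f) (mapAt R M j g) := by
  simp only [mapAt, AlgHom.ofLinearMap_apply, MultilinearMap.toLinearMap_apply,
    mapMultilinear_apply, Commute, SemiconjBy, ← PiTensorProduct.map_mul]
  congr 1
  funext k
  by_cases hki : k = i
  · subst hki; simp [Function.update_of_ne hij]
  · by_cases hkj : k = j
    · subst hkj; simp [Function.update_of_ne hki]
    · simp [Function.update_of_ne hki, Function.update_of_ne hkj]

end PiTensorProduct

theorem Commute.conj_of_mul_eq_one {M : Type*} [Monoid M] {a b k k' : M} (h : Commute a b)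
    (hk : k' * k = 1) : Commute (k * a * k') (k * b * k') := by
  simp only [Commute, SemiconjBy, mul_assoc]
  rw [← mul_assoc k' k, hk, one_mul, ← mul_assoc k' k, hk, one_mul, ← mul_assoc a, h.eq, mul_assoc]

namespace Matrix

variable {n R A : Type*} [Fintype n] [DecidableEq n] [CommRing R] [Ring A] [Algebra R A]

theorem commute_scalar_map_algebraMap (x : A) (C : Matrix n n R) :
    Commute (scalar n x) (C.map (algebraMap R A)) := by
  ext i j
  simp [scalar_apply, diagonal_mul, mul_diagonal, Algebra.commutes]

theorem commute_scalar_add_map_algebraMap_iff {x : A} {C : Matrix n n R} {M : Matrix n n A} :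
    Commute (scalar n x + C.map (algebraMap R A)) M ↔ ∀ i j,
      x * M i j - M i j * x =
        ∑ k, (M i k * algebraMap R A (C k j) - algebraMap R A (C i k) * M k j) := by
  simp only [Commute, SemiconjBy, ← ext_iff, add_mul, mul_add, add_apply, scalar_apply,
    diagonal_mul, mul_diagonal]
  simp only [mul_apply, map_apply, Finset.sum_sub_distrib]
  refine forall₂_congr fun i j => ?_
  rw [sub_eq_sub_iff_add_eq_add, add_comm _ (M i j * x)]

theorem _root_.Commute.transpose_of_scalar_add_map_algebraMap {x : A} {C : Matrix n n R}
    {M : Matrix n n A} (h : Commute (scalar n x + C.map (algebraMap R A)) M) :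
    Commute (scalar n x + (-Cᵀ).map (algebraMap R A)) Mᵀ := by
  rw [commute_scalar_add_map_algebraMap_iff] at h ⊢
  intro i j
  rw [transpose_apply, h j i]
  refine Finset.sum_congr rfl fun k _ => ?_
  simp only [transpose_apply, neg_apply, map_neg, mul_neg, neg_mul, sub_neg_eq_add,
    Algebra.commutes]
  abel

theorem _root_.Commute.conj_scalar_add_map_algebraMap {x : A} {C : Matrix n n R} {M : Matrix n n A}
    (h : Commute (scalar n x + C.map (algebraMap R A)) M) {P Q : Matrix n n R} (hPQ : P * Q = 1) :
    Commute (scalar n x + (P * C * Q).map (algebraMap R A))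
      (P.map (algebraMap R A) * M * Q.map (algebraMap R A)) := by
  have map_one' : (1 : Matrix n n R).map (algebraMap R A) = 1 :=
    Matrix.map_one _ (map_zero _) (map_one _)
  have hscalar : P.map (algebraMap R A) * scalar n x * Q.map (algebraMap R A) = scalar n x := by
    rw [← (commute_scalar_map_algebraMap x P).eq, mul_assoc, ← Matrix.map_mul, hPQ, map_one',
      mul_one]
  have hQP : Q.map (algebraMap R A) * P.map (algebraMap R A) = 1 := by
    rw [← Matrix.map_mul, mul_eq_one_comm.mp hPQ, map_one']
  simpa only [mul_add, add_mul, hscalar, Matrix.map_mul] using h.conj_of_mul_eq_one hQP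

theorem _root_.Commute.trace_of_scalar_add_map_algebraMap {x : A} {C : Matrix n n R}
    {M : Matrix n n A} (h : Commute (scalar n x + C.map (algebraMap R A)) M) : Commute x M.trace := by
  rw [commute_scalar_add_map_algebraMap_iff] at h
  rw [Commute, SemiconjBy, ← sub_eq_zero, trace, Finset.mul_sum, Finset.sum_mul,
    ← Finset.sum_sub_distrib]
  simp only [diag_apply, h, Finset.sum_sub_distrib]
  rw [Finset.sum_comm, sub_eq_zero]
  simp only [Algebra.commutes]

theorem mul_single_one_sub_single_one_mul (X : Matrix n n R) (i j : n) :
    X * single i j 1 - single i j 1 * X = ∑ k, (X k i • single k j 1 - X j k • single i k 1) := by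
  ext a b
  simp [mul_apply, single, Matrix.sum_apply, ite_and, mul_ite]

end Matrix

theorem siteOp_eq_mapAt (ℓ : Fin L) (X : Matrix (Fin N) (Fin N) ℂ) :
    siteOp ρ ℓ X = PiTensorProduct.mapAt ℂ V ℓ (ρ ℓ X) :=
  rfl

theorem sum_siteOp_mul_sub_mul
    (hρ : ∀ ℓ (X Y : Matrix (Fin N) (Fin N) ℂ),
      ρ ℓ (X * Y - Y * X) = ρ ℓ X * ρ ℓ Y - ρ ℓ Y * ρ ℓ X)
    (X Y : Matrix (Fin N) (Fin N) ℂ) (ℓ : Fin L) :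
    (∑ m, siteOp ρ m X) * siteOp ρ ℓ Y - siteOp ρ ℓ Y * ∑ m, siteOp ρ m X =
      siteOp ρ ℓ (X * Y - Y * X) := by
  rw [Finset.sum_mul, Finset.mul_sum, ← Finset.sum_sub_distrib, Finset.sum_eq_single ℓ
    (fun m _ hm => sub_eq_zero.mpr (PiTensorProduct.commute_mapAt hm _ _))
    (fun h => absurd (Finset.mem_univ ℓ) h)]
  simp only [siteOp_eq_mapAt, hρ, map_sub, map_mul]

theorem commute_Pm
    (hρ : ∀ ℓ (X Y : Matrix (Fin N) (Fin N) ℂ),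
      ρ ℓ (X * Y - Y * X) = ρ ℓ X * ρ ℓ Y - ρ ℓ Y * ρ ℓ X)
    (X : Matrix (Fin N) (Fin N) ℂ) (ℓ : Fin L) :
    Commute (scalar (Fin N) (∑ m, siteOp ρ m X) + emb V X) (Pm ρ ℓ) := by
  refine Matrix.commute_scalar_add_map_algebraMap_iff.mpr fun i j => ?_
  simp only [Pm, of_apply]
  rw [sum_siteOp_mul_sub_mul ρ hρ, Matrix.mul_single_one_sub_single_one_mul, siteOp_eq_mapAt]
  simp only [map_sum, map_sub, map_smul]
  simp only [← siteOp_eq_mapAt, Algebra.smul_def, Algebra.commutes]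

theorem commute_Tm
    (hρ : ∀ ℓ (X Y : Matrix (Fin N) (Fin N) ℂ),
      ρ ℓ (X * Y - Y * X) = ρ ℓ X * ρ ℓ Y - ρ ℓ Y * ρ ℓ X)
    (X : Matrix (Fin N) (Fin N) ℂ) (z : Fin L → ℂ) (u : ℂ) :
    Commute (scalar (Fin N) (∑ m, siteOp ρ m X) + emb V X) (Tm ρ z u) :=
  Commute.sum_right _ _ _ fun ℓ _ => (commute_Pm ρ hρ X ℓ).smul_right _

theorem commute_Sm
    (hρ : ∀ ℓ (X Y : Matrix (Fin N) (Fin N) ℂ),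
      ρ ℓ (X * Y - Y * X) = ρ ℓ X * ρ ℓ Y - ρ ℓ Y * ρ ℓ X)
    (z : Fin L → ℂ) {K : Matrix (Fin N) (Fin N) ℂ} (hK : IsUnit K.det)
    {X : Matrix (Fin N) (Fin N) ℂ} (hX : K * Xᵀ * K⁻¹ = -X) (u : ℂ) :
    Commute (scalar (Fin N) (∑ m, siteOp ρ m X) + emb V X) (Sm ρ z K u) := by
  have hconj := (commute_Tm ρ hρ X z (-u)).transpose_of_scalar_add_map_algebraMap
    |>.conj_scalar_add_map_algebraMap (mul_nonsing_inv K hK)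
  rw [mul_neg, neg_mul, hX, neg_neg] at hconj
  exact (commute_Tm ρ hρ X z u).add_right hconj

theorem statement13
    (hρ : ∀ ℓ (X Y : Matrix (Fin N) (Fin N) ℂ),
      ρ ℓ (X * Y - Y * X) = ρ ℓ X * ρ ℓ Y - ρ ℓ Y * ρ ℓ X)
    (z : Fin L → ℂ)
    (K : Matrix (Fin N) (Fin N) ℂ)
    (hKinv : IsUnit K.det)
    (X : Matrix (Fin N) (Fin N) ℂ) (hX : K * Xᵀ * K⁻¹ = -X)
    (u : ℂ) :
    (∑ ℓ : Fin L, siteOp ρ ℓ X) * (Sm ρ z K u * Sm ρ z K u).trace -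
      (Sm ρ z K u * Sm ρ z K u).trace * (∑ ℓ : Fin L, siteOp ρ ℓ X) = 0 := by
  have hS := commute_Sm ρ hρ z hKinv hX u
  exact sub_eq_zero.mpr (hS.mul_right hS).trace_of_scalar_add_map_algebraMap.eq
end
end
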